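/- arXiv:2402.17699 — 3 statements merged into one kernel-verified Lean document; each statement's English description precedes it below -/
import Mathlib

section
/- Under Assumption 1, if α < 1/(βM), then for every θ ∈ Θ the proposal normalizing constant admits the upper bound Z_{α,β}(θ) ≤ exp(−βU(θ)) · Σ_{x∈Θ} exp(βU(x)). -/
open scoped RealInnerProductSpace

/-!
The descent lemma for an `M`-smooth function, `⟪∇U θ, x - θ⟫ ≤ U x - U θ + M/2 ‖x - θ‖²`, follows
by differentiating along the segment from `θ` to `x`. Multiplied by `β`, its quadratic term
`βM/2 ‖x - θ‖²` is absorbed by the proposal's penalty `‖x - θ‖²/(2α)` because `αβM < 1`, so each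
summand of `Z_{α,β}(θ)` is at most `exp (β (U x - U θ))`.
-/

section Descent

variable {E : Type*} [NormedAddCommGroup E] [InnerProductSpace ℝ E]
  {f : E → ℝ} {f' : E → E} {M : ℝ}

theorem HasGradientAt.hasDerivAt_comp_add_smul [CompleteSpace E] {g : E} (x v : E) {t : ℝ}
    (hf : HasGradientAt f g (x + t • v)) :
    HasDerivAt (fun s : ℝ => f (x + s • v)) ⟪g, v⟫ t := by
  have hline : HasDerivAt (fun s : ℝ => x + s • v) v t := by
    simpa using ((hasDerivAt_id t).smul_const v).const_add x
  exact hf.hasFDerivAt.comp_hasDerivAt t hline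

theorem neg_mul_le_inner_sub_gradient
    (hLip : ∀ x y, ‖f' x - f' y‖ ≤ M * ‖x - y‖) (x v : E) {t : ℝ} (ht : 0 ≤ t) :
    -(M * t * ‖v‖ ^ 2) ≤ ⟪f' (x + t • v) - f' x, v⟫ := by
  have hdist : ‖f' (x + t • v) - f' x‖ ≤ M * (t * ‖v‖) := by
    simpa [norm_smul, abs_of_nonneg ht] using hLip (x + t • v) x
  calc -(M * t * ‖v‖ ^ 2) = -(M * (t * ‖v‖) * ‖v‖) := by ring
    _ ≤ -(‖f' (x + t • v) - f' x‖ * ‖v‖) := by gcongr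
    _ ≤ ⟪f' (x + t • v) - f' x, v⟫ := neg_le_of_abs_le (abs_real_inner_le_norm _ _)

theorem inner_gradient_le_sub_add_sq_norm [CompleteSpace E] (hf : ∀ x, HasGradientAt f (f' x) x)
    (hLip : ∀ x y, ‖f' x - f' y‖ ≤ M * ‖x - y‖) (x y : E) :
    ⟪f' x, y - x⟫ ≤ f y - f x + M / 2 * ‖y - x‖ ^ 2 := by
  set v := y - x
  set ψ : ℝ → ℝ := fun t => f (x + t • v) - t * ⟪f' x, v⟫ + M * t ^ 2 / 2 * ‖v‖ ^ 2
  have hψ : ∀ t, HasDerivAt ψ (⟪f' (x + t • v), v⟫ - ⟪f' x, v⟫ + M * t * ‖v‖ ^ 2) t := by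
    intro t
    have hsq := (((hasDerivAt_pow 2 t).const_mul M).div_const 2).mul_const (‖v‖ ^ 2)
    have h := (((hf _).hasDerivAt_comp_add_smul x v).sub
      ((hasDerivAt_id t).mul_const ⟪f' x, v⟫)).add hsq
    refine h.congr_deriv ?_
    simp only [Nat.cast_ofNat, Nat.add_one_sub_one, pow_one, one_mul]
    ring
  have hmono : MonotoneOn ψ (Set.Icc 0 1) := by
    refine monotoneOn_of_deriv_nonneg (convex_Icc 0 1)
      (fun t _ => (hψ t).continuousAt.continuousWithinAt)
      (fun t _ => (hψ t).differentiableAt.differentiableWithinAt) fun t ht => ?_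
    rw [(hψ t).deriv, ← inner_sub_left]
    have := neg_mul_le_inner_sub_gradient hLip x v (interior_subset ht).1
    linarith
  have h01 : ψ 0 ≤ ψ 1 := hmono (by simp) (by simp) zero_le_one
  simp only [ψ, v, zero_smul, add_zero, zero_mul, sub_zero, zero_pow two_ne_zero, mul_zero,
    zero_div, one_smul, one_mul, one_pow, add_sub_cancel] at h01
  linarith

theorem mul_inner_gradient_sub_sq_norm_div_le [CompleteSpace E]
    (hf : ∀ x, HasGradientAt f (f' x) x) (hLip : ∀ x y, ‖f' x - f' y‖ ≤ M * ‖x - y‖)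
    {α β : ℝ} (hα : 0 < α) (hβ : 0 ≤ β) (hβM : β * M ≤ 1 / α) (x y : E) :
    β * ⟪f' x, y - x⟫ - ‖y - x‖ ^ 2 / (2 * α) ≤ β * (f y - f x) := by
  have hquad : β * (M / 2 * ‖y - x‖ ^ 2) ≤ ‖y - x‖ ^ 2 / (2 * α) := by
    calc β * (M / 2 * ‖y - x‖ ^ 2) = β * M / 2 * ‖y - x‖ ^ 2 := by ring
      _ ≤ 1 / α / 2 * ‖y - x‖ ^ 2 := by gcongr
      _ = ‖y - x‖ ^ 2 / (2 * α) := by field_simp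
  have hdescent := mul_le_mul_of_nonneg_left (inner_gradient_le_sub_add_sq_norm hf hLip x y) hβ
  rw [mul_add] at hdescent
  linarith

end Descent

theorem proposal_normalizer_upper_bound_general
    {d : ℕ}
    (Θ : Finset (EuclideanSpace ℝ (Fin d)))
    (U : EuclideanSpace ℝ (Fin d) → ℝ)
    (gradU : EuclideanSpace ℝ (Fin d) → EuclideanSpace ℝ (Fin d))
    (hgrad : ∀ x, HasGradientAt U (gradU x) x)
    -- Assumption 1: ∇U is M-Lipschitz
    (M : ℝ)
    (hLip : ∀ x y, ‖gradU x - gradU y‖ ≤ M * ‖x - y‖)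
    -- step size and balancing parameter
    (α β : ℝ) (hα : 0 < α) (hβ0 : 0 < β)
    (hαβM : α < 1 / (β * M))
    -- the proposal normalizing constant Z_{α,β}
    (Zc : EuclideanSpace ℝ (Fin d) → ℝ)
    (hZc : ∀ θ, Zc θ =
      ∑ x ∈ Θ, Real.exp (β * ⟪gradU θ, x - θ⟫ - ‖x - θ‖ ^ 2 / (2 * α)))
 :
    ∀ θ ∈ Θ, Zc θ ≤ Real.exp (-(β * U θ)) * ∑ x ∈ Θ, Real.exp (β * U x) := by
  intro θ _
  -- `α < 1 / (β * M)` with `0 < α` forces `0 < β * M`, since `1 / 0 = 0`.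
  have hβM : β * M < 1 / α := (lt_one_div hα (one_div_pos.1 (hα.trans hαβM))).1 hαβM
  rw [hZc, Finset.mul_sum]
  refine Finset.sum_le_sum fun x _ => ?_
  rw [← Real.exp_add, Real.exp_le_exp]
  linarith [mul_inner_gradient_sub_sq_norm_div_le hgrad hLip hα hβ0.le hβM.le θ x]

/-- under Assumption 1, if α < 1/(βM), then for every θ ∈ Θ the proposal
normalizing constant satisfies Z_{α,β}(θ) ≤ exp(−βU(θ)) · Σ_{x∈Θ} exp(βU(x)). -/
theorem proposal_normalizer_upper_bound
    {d : ℕ} (hd : 1 ≤ d)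
    (Θ : Finset (EuclideanSpace ℝ (Fin d))) (hΘ : Θ.Nonempty)
    (U : EuclideanSpace ℝ (Fin d) → ℝ) (hU : ContDiff ℝ 2 U)
    (gradU : EuclideanSpace ℝ (Fin d) → EuclideanSpace ℝ (Fin d))
    (hgrad : ∀ x, HasGradientAt U (gradU x) x)
    -- Assumption 1: ∇U is M-Lipschitz
    (M : ℝ) (hM : 0 < M)
    (hLip : ∀ x y, ‖gradU x - gradU y‖ ≤ M * ‖x - y‖)
    -- step size and balancing parameter
    (α β : ℝ) (hα : 0 < α) (hβ0 : 0 < β) (hβ1 : β ≤ 1)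
    (hαβM : α < 1 / (β * M))
    -- the proposal normalizing constant Z_{α,β}
    (Zc : EuclideanSpace ℝ (Fin d) → ℝ)
    (hZc : ∀ θ, Zc θ =
      ∑ x ∈ Θ, Real.exp (β * ⟪gradU θ, x - θ⟫ - ‖x - θ‖ ^ 2 / (2 * α)))
 :
    ∀ θ ∈ Θ, Zc θ ≤ Real.exp (-(β * U θ)) * ∑ x ∈ Θ, Real.exp (β * U x) :=
  proposal_normalizer_upper_bound_general Θ U gradU hgrad M hLip α β hα hβ0 hαβM Zc hZc
end

section
/- Under Assumption 2, if αβm ≤ 1, then for every θ ∈ Θ the proposal normalizing constant admits the lower bound Z_{α,β}(θ) ≥ exp(−βU(θ) − (1/2)(1/α − βm)·diam(Θ)²) · Σ_{x∈Θ} exp(βU(x)). -/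
open scoped RealInnerProductSpace BigOperators
open Classical

/-- under Assumption 2, if αβm ≤ 1, then for every θ ∈ Θ the proposal
normalizing constant satisfies
Z_{α,β}(θ) ≥ exp(−βU(θ) − (1/2)(1/α − βm)·diam(Θ)²) · Σ_{x∈Θ} exp(βU(x)). -/
theorem proposal_normalizer_lower_bound
    {d : ℕ} (hd : 1 ≤ d)
    (Θ : Finset (EuclideanSpace ℝ (Fin d))) (hΘ : Θ.Nonempty)
    (U : EuclideanSpace ℝ (Fin d) → ℝ) (hU : ContDiff ℝ 2 U)
    (gradU : EuclideanSpace ℝ (Fin d) → EuclideanSpace ℝ (Fin d))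
    (hgrad : ∀ x, HasGradientAt U (gradU x) x)
    -- Assumption 2: U is m-strongly concave on the convex hull of Θ
    (m : ℝ) (hm : 0 < m)
    (hconc : ∀ x ∈ convexHull ℝ (Θ : Set (EuclideanSpace ℝ (Fin d))),
      ∀ y ∈ convexHull ℝ (Θ : Set (EuclideanSpace ℝ (Fin d))),
        U y ≤ U x + ⟪gradU x, y - x⟫ - (m / 2) * ‖y - x‖ ^ 2)
    -- step size and balancing parameter
    (α β : ℝ) (hα : 0 < α) (hβ0 : 0 < β) (hβ1 : β ≤ 1)
    (hαβm : α * β * m ≤ 1)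
    -- the proposal normalizing constant Z_{α,β}
    (Zc : EuclideanSpace ℝ (Fin d) → ℝ)
    (hZc : ∀ θ, Zc θ =
      ∑ x ∈ Θ, Real.exp (β * ⟪gradU θ, x - θ⟫ - ‖x - θ‖ ^ 2 / (2 * α)))
    -- diam(Θ)
    (D : ℝ) (hD : IsGreatest {r : ℝ | ∃ θ ∈ Θ, ∃ θ' ∈ Θ, r = ‖θ - θ'‖} D)
 :
    ∀ θ ∈ Θ,
      Real.exp (-(β * U θ) - (1 / 2) * (1 / α - β * m) * D ^ 2)
          * ∑ x ∈ Θ, Real.exp (β * U x) ≤ Zc θ := by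
  intro θ hθ
  rw [hZc, Finset.mul_sum]
  apply Finset.sum_le_sum
  intro x hx
  rw [← Real.exp_add]
  apply Real.exp_le_exp.mpr
  have hθc : θ ∈ convexHull ℝ (Θ : Set (EuclideanSpace ℝ (Fin d))) :=
    subset_convexHull ℝ _ hθ
  have hxc : x ∈ convexHull ℝ (Θ : Set (EuclideanSpace ℝ (Fin d))) :=
    subset_convexHull ℝ _ hx
  have h1 := hconc θ hθc x hxc
  have hr : ‖x - θ‖ ≤ D := hD.2 ⟨x, hx, θ, hθ, rfl⟩
  have hr2 : ‖x - θ‖ ^ 2 ≤ D ^ 2 := pow_le_pow_left₀ (norm_nonneg _) hr 2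
  have hc : 0 ≤ 1 / α - β * m := by
    rw [sub_nonneg, le_div_iff₀ hα]
    nlinarith
  have hdiv : ‖x - θ‖ ^ 2 / (2 * α) = (1 / 2) * (1 / α) * ‖x - θ‖ ^ 2 := by
    field_simp
  rw [hdiv]
  nlinarith [mul_le_mul_of_nonneg_left h1 hβ0.le,
    mul_nonneg hc (sub_nonneg.mpr hr2)]
end

section
/- Under Assumption 1 and Assumption 2, if α < 1/(βM) and αβm ≤ 1, then for all θ, θ' ∈ Θ the ratio of proposal normalizing constants satisfies Z_{α,β}(θ) / Z_{α,β}(θ') ≥ exp(β(U(θ') − U(θ))) / exp((1/2)(1/α − βm)·diam(Θ)²). -/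
open scoped RealInnerProductSpace

/-! With `S = ∑_{x ∈ Θ} exp(β U x)`, strong concavity bounds every term of `Z(θ)` from below and
gives `exp(-β U θ - ½(1/α - βm) D²) · S ≤ Z(θ)`; the descent lemma for the `M`-Lipschitz gradient
together with `βM ≤ 1/α` bounds every term of `Z(θ')` from above and gives
`Z(θ') ≤ exp(-β U θ') · S`. Dividing the two bounds, `S` cancels. -/

section

variable {E : Type*} [NormedAddCommGroup E] [InnerProductSpace ℝ E]

theorem add_inner_sub_sq_le_of_lipschitz_gradient [CompleteSpace E] {U : E → ℝ} {g : E → E}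
    (hg : ∀ x, HasGradientAt U (g x) x) {M : ℝ} (hLip : ∀ x y, ‖g x - g y‖ ≤ M * ‖x - y‖)
    (x y : E) : U x + ⟪g x, y - x⟫ - M / 2 * ‖y - x‖ ^ 2 ≤ U y := by
  set v := y - x
  have hline : ∀ t : ℝ, HasDerivAt (fun t : ℝ => U (x + t • v)) ⟪g (x + t • v), v⟫ t := by
    intro t
    have hγ : HasDerivAt (fun t : ℝ => x + t • v) v t := by
      simpa using ((hasDerivAt_id t).smul_const v).const_add x
    have hcomp := (hg (x + t • v)).hasFDerivAt.comp_hasDerivAt t hγ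
    simp only [InnerProductSpace.toDual_apply_apply] at hcomp
    exact hcomp
  -- `φ 0 ≤ φ 1` is the claim; `φ` increases on `[0, 1]` as `g` moves by at most `M t ‖v‖` there
  let φ : ℝ → ℝ := fun t => U (x + t • v) - t * ⟪g x, v⟫ + M / 2 * ‖v‖ ^ 2 * t ^ 2
  have hφ : ∀ t, HasDerivAt φ (⟪g (x + t • v) - g x, v⟫ + M * ‖v‖ ^ 2 * t) t := by
    intro t
    refine (((hline t).sub ((hasDerivAt_id t).mul_const ⟪g x, v⟫)).add
      ((hasDerivAt_pow 2 t).const_mul (M / 2 * ‖v‖ ^ 2))).congr_deriv ?_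
    rw [inner_sub_left]
    simp only [one_mul, Nat.cast_ofNat, Nat.add_one_sub_one, pow_one, add_right_inj]
    ring
  have hφ_nonneg : ∀ t ∈ interior (Set.Icc (0 : ℝ) 1),
      0 ≤ ⟪g (x + t • v) - g x, v⟫ + M * ‖v‖ ^ 2 * t := by
    intro t ht
    rw [interior_Icc] at ht
    have hgt : ‖g (x + t • v) - g x‖ ≤ M * (t * ‖v‖) := by
      simpa [norm_smul, abs_of_pos ht.1] using hLip (x + t • v) x
    nlinarith [neg_le_of_abs_le (abs_real_inner_le_norm (g (x + t • v) - g x) v), norm_nonneg v]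
  have hmono : MonotoneOn φ (Set.Icc 0 1) :=
    monotoneOn_of_hasDerivWithinAt_nonneg (convex_Icc 0 1)
      (fun t _ => (hφ t).continuousAt.continuousWithinAt)
      (fun t _ => (hφ t).hasDerivWithinAt) hφ_nonneg
  have h01 : φ 0 ≤ φ 1 :=
    hmono (Set.left_mem_Icc.2 zero_le_one) (Set.right_mem_Icc.2 zero_le_one) zero_le_one
  simp only [φ, v, zero_smul, one_smul, add_zero, add_sub_cancel, zero_mul, sub_zero, one_mul,
    one_pow, mul_one, zero_pow two_ne_zero, mul_zero] at h01
  linarith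

/-- `Z_{α,β}(θ)`, with `g` in the role of `∇U`. -/
noncomputable def proposalNormalizer (Θ : Finset E) (g : E → E) (α β : ℝ) (θ : E) : ℝ :=
  ∑ x ∈ Θ, Real.exp (β * ⟪g θ, x - θ⟫ - ‖x - θ‖ ^ 2 / (2 * α))

theorem proposalNormalizer_pos {Θ : Finset E} {θ : E} (hθ : θ ∈ Θ) (g : E → E) (α β : ℝ) :
    0 < proposalNormalizer Θ g α β θ :=
  Finset.sum_pos (fun _ _ => Real.exp_pos _) ⟨θ, hθ⟩

theorem exp_mul_sum_exp_le_proposalNormalizer {Θ : Finset E} {U : E → ℝ} {g : E → E}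
    {θ : E} {m α β D : ℝ} (hα : 0 < α) (hβ : 0 ≤ β) (hβm : β * m ≤ 1 / α)
    (hconc : ∀ x ∈ Θ, U x ≤ U θ + ⟪g θ, x - θ⟫ - m / 2 * ‖x - θ‖ ^ 2)
    (hD : ∀ x ∈ Θ, ‖x - θ‖ ≤ D) :
    Real.exp (-(β * U θ) - 1 / 2 * (1 / α - β * m) * D ^ 2) * ∑ x ∈ Θ, Real.exp (β * U x)
      ≤ proposalNormalizer Θ g α β θ := by
  rw [Finset.mul_sum]
  refine Finset.sum_le_sum fun x hx => ?_
  rw [← Real.exp_add, Real.exp_le_exp]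
  have hsq : ‖x - θ‖ ^ 2 ≤ D ^ 2 := pow_le_pow_left₀ (norm_nonneg _) (hD x hx) 2
  have hquad : (1 / α - β * m) * ‖x - θ‖ ^ 2 ≤ (1 / α - β * m) * D ^ 2 :=
    mul_le_mul_of_nonneg_left hsq (by linarith)
  have hconcβ := mul_le_mul_of_nonneg_left (hconc x hx) hβ
  have : ‖x - θ‖ ^ 2 / (2 * α) = 1 / α * ‖x - θ‖ ^ 2 / 2 := by field_simp
  linarith

theorem proposalNormalizer_le_exp_mul_sum_exp {Θ : Finset E} {U : E → ℝ} {g : E → E}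
    {θ : E} {M α β : ℝ} (hα : 0 < α) (hβ : 0 ≤ β) (hβM : β * M ≤ 1 / α)
    (hdesc : ∀ x ∈ Θ, U θ + ⟪g θ, x - θ⟫ - M / 2 * ‖x - θ‖ ^ 2 ≤ U x) :
    proposalNormalizer Θ g α β θ ≤ Real.exp (-(β * U θ)) * ∑ x ∈ Θ, Real.exp (β * U x) := by
  rw [Finset.mul_sum]
  refine Finset.sum_le_sum fun x hx => ?_
  rw [← Real.exp_add, Real.exp_le_exp]
  have hdescβ := mul_le_mul_of_nonneg_left (hdesc x hx) hβ
  have hquad : β * M * ‖x - θ‖ ^ 2 ≤ 1 / α * ‖x - θ‖ ^ 2 :=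
    mul_le_mul_of_nonneg_right hβM (sq_nonneg _)
  have : ‖x - θ‖ ^ 2 / (2 * α) = 1 / α * ‖x - θ‖ ^ 2 / 2 := by field_simp
  linarith

end

theorem proposal_normalizer_ratio_bound_general
    {d : ℕ}
    (Θ : Finset (EuclideanSpace ℝ (Fin d)))
    (U : EuclideanSpace ℝ (Fin d) → ℝ)
    (gradU : EuclideanSpace ℝ (Fin d) → EuclideanSpace ℝ (Fin d))
    (hgrad : ∀ x, HasGradientAt U (gradU x) x)
    -- Assumption 1: ∇U is M-Lipschitz
    (M : ℝ)
    (hLip : ∀ x y, ‖gradU x - gradU y‖ ≤ M * ‖x - y‖)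
    -- Assumption 2: U is m-strongly concave on the convex hull of Θ
    (m : ℝ)
    (hconc : ∀ x ∈ convexHull ℝ (Θ : Set (EuclideanSpace ℝ (Fin d))),
      ∀ y ∈ convexHull ℝ (Θ : Set (EuclideanSpace ℝ (Fin d))),
        U y ≤ U x + ⟪gradU x, y - x⟫ - (m / 2) * ‖y - x‖ ^ 2)
    -- step size and balancing parameter
    (α β : ℝ) (hα : 0 < α) (hβ0 : 0 < β)
    (hαβM : α < 1 / (β * M)) (hαβm : α * β * m ≤ 1)
    -- the proposal normalizing constant Z_{α,β}
    (Zc : EuclideanSpace ℝ (Fin d) → ℝ)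
    (hZc : ∀ θ, Zc θ =
      ∑ x ∈ Θ, Real.exp (β * ⟪gradU θ, x - θ⟫ - ‖x - θ‖ ^ 2 / (2 * α)))
    -- diam(Θ)
    (D : ℝ) (hD : IsGreatest {r : ℝ | ∃ θ ∈ Θ, ∃ θ' ∈ Θ, r = ‖θ - θ'‖} D)
 :
    ∀ θ ∈ Θ, ∀ θ' ∈ Θ,
      Real.exp (β * (U θ' - U θ)) / Real.exp ((1 / 2) * (1 / α - β * m) * D ^ 2)
        ≤ Zc θ / Zc θ' := by
  intro θ hθ θ' hθ'
  obtain rfl : Zc = proposalNormalizer Θ gradU α β := funext hZc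
  have hβm : β * m ≤ 1 / α := by rw [le_div_iff₀ hα]; linarith
  have hβM : β * M ≤ 1 / α := by
    have hβM_pos : 0 < β * M := one_div_pos.1 (hα.trans hαβM)
    rw [lt_one_div hα hβM_pos] at hαβM
    exact hαβM.le
  have hΘ_hull := subset_convexHull ℝ (Θ : Set (EuclideanSpace ℝ (Fin d)))
  have hlower := exp_mul_sum_exp_le_proposalNormalizer (g := gradU) hα hβ0.le hβm
    (fun x hx => hconc θ (hΘ_hull hθ) x (hΘ_hull hx)) (fun x hx => hD.2 ⟨x, hx, θ, hθ, rfl⟩)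
  have hupper := proposalNormalizer_le_exp_mul_sum_exp (Θ := Θ) (g := gradU) hα hβ0.le hβM
    (fun x _ => add_inner_sub_sq_le_of_lipschitz_gradient hgrad hLip θ' x)
  set S := ∑ x ∈ Θ, Real.exp (β * U x)
  have hS : 0 < S := Finset.sum_pos (fun x _ => Real.exp_pos _) ⟨θ, hθ⟩
  calc Real.exp (β * (U θ' - U θ)) / Real.exp ((1 / 2) * (1 / α - β * m) * D ^ 2)
      = Real.exp (-(β * U θ) - 1 / 2 * (1 / α - β * m) * D ^ 2) * S
        / (Real.exp (-(β * U θ')) * S) := by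
        rw [mul_div_mul_right _ _ hS.ne', ← Real.exp_sub, ← Real.exp_sub]
        ring_nf
    _ ≤ _ := div_le_div₀ (proposalNormalizer_pos hθ _ _ _).le hlower
        (proposalNormalizer_pos hθ' _ _ _) hupper

/-- under Assumptions 1 and 2, if α < 1/(βM) and αβm ≤ 1, then for all
θ, θ' ∈ Θ the ratio of proposal normalizing constants satisfies
Z_{α,β}(θ)/Z_{α,β}(θ') ≥ exp(β(U(θ') − U(θ))) / exp((1/2)(1/α − βm)·diam(Θ)²). -/
theorem proposal_normalizer_ratio_bound
    {d : ℕ} (hd : 1 ≤ d)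
    (Θ : Finset (EuclideanSpace ℝ (Fin d))) (hΘ : Θ.Nonempty)
    (U : EuclideanSpace ℝ (Fin d) → ℝ) (hU : ContDiff ℝ 2 U)
    (gradU : EuclideanSpace ℝ (Fin d) → EuclideanSpace ℝ (Fin d))
    (hgrad : ∀ x, HasGradientAt U (gradU x) x)
    -- Assumption 1: ∇U is M-Lipschitz
    (M : ℝ) (hM : 0 < M)
    (hLip : ∀ x y, ‖gradU x - gradU y‖ ≤ M * ‖x - y‖)
    -- Assumption 2: U is m-strongly concave on the convex hull of Θ
    (m : ℝ) (hm : 0 < m)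
    (hconc : ∀ x ∈ convexHull ℝ (Θ : Set (EuclideanSpace ℝ (Fin d))),
      ∀ y ∈ convexHull ℝ (Θ : Set (EuclideanSpace ℝ (Fin d))),
        U y ≤ U x + ⟪gradU x, y - x⟫ - (m / 2) * ‖y - x‖ ^ 2)
    -- step size and balancing parameter
    (α β : ℝ) (hα : 0 < α) (hβ0 : 0 < β) (hβ1 : β ≤ 1)
    (hαβM : α < 1 / (β * M)) (hαβm : α * β * m ≤ 1)
    -- the proposal normalizing constant Z_{α,β}
    (Zc : EuclideanSpace ℝ (Fin d) → ℝ)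
    (hZc : ∀ θ, Zc θ =
      ∑ x ∈ Θ, Real.exp (β * ⟪gradU θ, x - θ⟫ - ‖x - θ‖ ^ 2 / (2 * α)))
    -- diam(Θ)
    (D : ℝ) (hD : IsGreatest {r : ℝ | ∃ θ ∈ Θ, ∃ θ' ∈ Θ, r = ‖θ - θ'‖} D)
 :
    ∀ θ ∈ Θ, ∀ θ' ∈ Θ,
      Real.exp (β * (U θ' - U θ)) / Real.exp ((1 / 2) * (1 / α - β * m) * D ^ 2)
        ≤ Zc θ / Zc θ' :=
  proposal_normalizer_ratio_bound_general Θ U gradU hgrad M hLip m hconc α β hα hβ0 hαβM hαβm Zc hZc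
    D hD
end
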